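/- Let (R, m) → (S, n) be a local homomorphism of Noetherian local rings and M a finitely generated R-module with Tor_i^R(M, S) = 0 for all i > 0. Then pd_R M < ∞ if and only if pd_S (M ⊗_R S) < ∞. -/

import Mathlib

open CategoryTheory

/-- The `i`-th Ext group of `R`-modules `M` and `N`. -/
noncomputable abbrev ExtGroup (R : Type) [CommRing R] (M N : ModuleCat.{0} R) (i : ℕ) : Type :=
  (((Ext R (ModuleCat.{0} R) i).obj (Opposite.op M)).obj N)

/-- The `i`-th Tor group of `R`-modules `M` and `N`. -/
noncomputable abbrev TorGroup (R : Type) [CommRing R] (M N : ModuleCat.{0} R) (i : ℕ) : Type :=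
  (((Tor (ModuleCat.{0} R) i).obj M).obj N)

/-- `IsSyzygyOf R n K M`: `K` is an `n`-th syzygy of `M` in a resolution of `M` by
finitely generated free `R`-modules. -/
inductive IsSyzygyOf (R : Type) [CommRing R] : ℕ → ModuleCat.{0} R → ModuleCat.{0} R → Prop
  | zero (M : ModuleCat.{0} R) : IsSyzygyOf R 0 M M
  | succ {n : ℕ} {K N M : ModuleCat.{0} R} (F : ModuleCat.{0} R)
      (hfree : Module.Free R F) (hfin : Module.Finite R F)
      (f : K →ₗ[R] F) (g : F →ₗ[R] N)
      (hf : Function.Injective f) (hg : Function.Surjective g)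
      (hfg : LinearMap.range f = LinearMap.ker g)
      (hN : IsSyzygyOf R n N M) : IsSyzygyOf R (n + 1) K M

/-- A finitely generated module over a Noetherian local ring has projective dimension
at most `n` iff some `n`-th syzygy of it (in a finite free resolution) is free. -/
def ProjDimLE (R : Type) [CommRing R] (n : ℕ) (M : ModuleCat.{0} R) : Prop :=
  ∃ K : ModuleCat.{0} R, IsSyzygyOf R n K M ∧ Module.Free R K

/-!
Compute `Tor^R(-, S)` with a projective resolution `P` of `S`. Dimension shifting along
`0 → K → F → N → 0` with `F` free shows that `Tor_{>0}(-, S) = 0` passes from `N` to `K` and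
that then `0 → S ⊗ K → S ⊗ F → S ⊗ N → 0` stays exact. So base change turns a finite free
resolution of `M` into one of `S ⊗ M` with syzygies `S ⊗ K`, whence `pd_S (S ⊗ M) < ∞`.

Conversely, let `K` be an `n`-th syzygy of `M`, finitely generated as `R` is Noetherian. If some
`n`-th syzygy of `S ⊗ M` is free, Schanuel's lemma makes `S ⊗ K` projective. Take a minimal
presentation `0 → L → R^d → K → 0`, so `L ≤ 𝔪R^d`. As `Tor_1(K, S) = 0`, `S ⊗ L` is the kernel
of `S^d → S ⊗ K`, a direct summand of `S^d` contained in `𝔫S^d`, hence zero by Nakayama. Since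
`R → S` is local and `L` is finitely generated, `L = 0`, so `K ≅ R^d` is free.
-/

open TensorProduct LinearMap

section TensorChase

variable {R : Type*} [CommRing R] {K F N A B C D : Type*}
  [AddCommGroup K] [AddCommGroup F] [AddCommGroup N] [AddCommGroup A]
  [AddCommGroup B] [AddCommGroup C] [AddCommGroup D]
  [Module R K] [Module R F] [Module R N] [Module R A] [Module R B] [Module R C] [Module R D]
  {f : K →ₗ[R] F} {g : F →ₗ[R] N} {q : D →ₗ[R] C} {p : C →ₗ[R] B} {r : B →ₗ[R] A}

theorem rTensor_lTensor_comm (f : K →ₗ[R] F) (p : C →ₗ[R] B) (x : K ⊗[R] C) :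
    rTensor B f (lTensor K p x) = lTensor F p (rTensor C f x) := by
  rw [← LinearMap.comp_apply, ← LinearMap.comp_apply, rTensor_comp_lTensor, lTensor_comp_rTensor]

theorem lTensor_apply_eq_zero_of_comp_eq_zero (M : Type*) [AddCommGroup M] [Module R M]
    (h : p ∘ₗ q = 0) (x : M ⊗[R] D) : lTensor M p (lTensor M q x) = 0 := by
  rw [← LinearMap.comp_apply, ← lTensor_comp, h, lTensor_zero, LinearMap.zero_apply]

/-- The diagram chase behind dimension shifting in the first variable of `Tor`. -/
theorem mem_range_lTensor_of_rTensor_mem_range (hf : Function.Injective f)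
    (hfg : Function.Exact f g) (hg : Function.Surjective g) [Module.Flat R C] [Module.Flat R B]
    (hpq : p ∘ₗ q = 0) (hN : Function.Exact (lTensor N q) (lTensor N p))
    {x : K ⊗[R] B} (hx : rTensor B f x ∈ range (lTensor F p)) : x ∈ range (lTensor K p) := by
  obtain ⟨y, hy⟩ := hx
  have hgy : rTensor C g y ∈ ker (lTensor N p) := by
    rw [mem_ker, ← rTensor_lTensor_comm, hy, ← LinearMap.comp_apply, ← rTensor_comp,
      hfg.linearMap_comp_eq_zero, rTensor_zero, LinearMap.zero_apply]
  obtain ⟨z, hz⟩ := (hN _).mp hgy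
  obtain ⟨z, rfl⟩ := rTensor_surjective D hg z
  obtain ⟨w, hw⟩ : y - lTensor F q z ∈ range (rTensor C f) := by
    rw [← (Module.Flat.rTensor_exact C hfg).linearMap_ker_eq, mem_ker, map_sub,
      rTensor_lTensor_comm, hz, sub_self]
  refine ⟨w, Module.Flat.rTensor_preserves_injective_linearMap f hf ?_⟩
  rw [rTensor_lTensor_comm, hw, map_sub, lTensor_apply_eq_zero_of_comp_eq_zero F hpq, sub_zero, hy]

theorem exact_lTensor_of_shortExact (hf : Function.Injective f) (hfg : Function.Exact f g)
    (hg : Function.Surjective g) [Module.Flat R F] [Module.Flat R C] [Module.Flat R B]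
    (hpq : p ∘ₗ q = 0) (hpr : Function.Exact p r)
    (hN : Function.Exact (lTensor N q) (lTensor N p)) :
    Function.Exact (lTensor K p) (lTensor K r) := by
  refine exact_of_comp_of_mem_range ?_ fun x hx ↦ ?_
  · rw [← lTensor_comp, hpr.linearMap_comp_eq_zero, lTensor_zero]
  refine mem_range_lTensor_of_rTensor_mem_range hf hfg hg hpq hN ?_
  rw [← (Module.Flat.lTensor_exact F hpr).linearMap_ker_eq, mem_ker, ← rTensor_lTensor_comm,
    hx, map_zero]

theorem rTensor_injective_of_shortExact (hf : Function.Injective f) (hfg : Function.Exact f g)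
    (hg : Function.Surjective g) [Module.Flat R F] [Module.Flat R C] [Module.Flat R B]
    (hpq : p ∘ₗ q = 0) (hpr : Function.Exact p r) (hr : Function.Surjective r)
    (hN : Function.Exact (lTensor N q) (lTensor N p)) :
    Function.Injective (rTensor A f) := by
  refine (injective_iff_map_eq_zero _).mpr fun x hx ↦ ?_
  obtain ⟨x, rfl⟩ := lTensor_surjective K hr x
  obtain ⟨w, rfl⟩ := mem_range_lTensor_of_rTensor_mem_range hf hfg hg hpq hN (x := x) (by
    rw [← (Module.Flat.lTensor_exact F hpr).linearMap_ker_eq, mem_ker, ← rTensor_lTensor_comm, hx])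
  exact lTensor_apply_eq_zero_of_comp_eq_zero K hpr.linearMap_comp_eq_zero w

end TensorChase

namespace CategoryTheory.ProjectiveResolution

variable {R : Type} [CommRing R] {T : ModuleCat.{0} R} (P : ProjectiveResolution T)

instance flat_X (i : ℕ) : Module.Flat R (P.complex.X i) :=
  have : Module.Projective R (P.complex.X i) := (IsProjective.iff_projective _).mpr (P.projective i)
  Module.Flat.of_projective

theorem d_hom_comp_d_hom (i : ℕ) :
    (P.complex.d (i + 1) i).hom ∘ₗ (P.complex.d (i + 2) (i + 1)).hom = 0 := by
  rw [← ModuleCat.hom_comp, P.complex.d_comp_d, ModuleCat.hom_zero]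

theorem exact_d_hom (i : ℕ) :
    Function.Exact (P.complex.d (i + 2) (i + 1)).hom (P.complex.d (i + 1) i).hom :=
  (ShortComplex.ShortExact.moduleCat_exact_iff_function_exact _).mp (P.exact_succ i)

theorem exact_d_hom_π_hom : Function.Exact (P.complex.d 1 0).hom (P.π.f 0).hom :=
  (ShortComplex.ShortExact.moduleCat_exact_iff_function_exact _).mp
    (ShortComplex.exact_of_g_is_cokernel
      (ShortComplex.mk _ _ P.complex_d_comp_π_f_zero) P.isColimitCokernelCofork)

theorem surjective_π_hom : Function.Surjective (P.π.f 0).hom :=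
  (ModuleCat.epi_iff_surjective _).mp inferInstance

/-- `N ⊗ P` is exact in positive degrees, i.e. `Tor_i(N, T) = 0` for `i > 0`. -/
def TorVanishes (N : Type) [AddCommGroup N] [Module R N] : Prop :=
  ∀ i, Function.Exact (lTensor N (P.complex.d (i + 2) (i + 1)).hom)
    (lTensor N (P.complex.d (i + 1) i).hom)

theorem torVanishes_of_subsingleton_torGroup (N : Type) [AddCommGroup N] [Module R N]
    (h : ∀ i, 0 < i → Subsingleton (TorGroup R (ModuleCat.of R N) T i)) : P.TorVanishes N := by
  intro i
  set Q := (((MonoidalCategory.tensoringLeft _).obj (ModuleCat.of R N)).mapHomologicalComplex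
    _).obj P.complex
  have hzero : Limits.IsZero (Q.homology (i + 1)) :=
    (@ModuleCat.isZero_of_subsingleton _ _ _ (h (i + 1) i.succ_pos)).of_iso
      (P.isoLeftDerivedObj _ (i + 1)).symm
  exact (ShortComplex.ShortExact.moduleCat_exact_iff_function_exact _).mp
    ((Q.exactAt_iff' (i + 2) (i + 1) i (by simp) (by simp)).mp
      ((Q.exactAt_iff_isZero_homology _).mpr hzero))

variable {P} {K F N : Type} [AddCommGroup K] [AddCommGroup F] [AddCommGroup N]
  [Module R K] [Module R F] [Module R N] [Module.Flat R F] {f : K →ₗ[R] F} {g : F →ₗ[R] N}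

theorem TorVanishes.of_shortExact (hf : Function.Injective f) (hfg : Function.Exact f g)
    (hg : Function.Surjective g) (hN : P.TorVanishes N) : P.TorVanishes K := fun i ↦
  exact_lTensor_of_shortExact hf hfg hg (P.d_hom_comp_d_hom (i + 1)) (P.exact_d_hom i) (hN (i + 1))

theorem rTensor_injective_of_torVanishes (hf : Function.Injective f) (hfg : Function.Exact f g)
    (hg : Function.Surjective g) (hN : P.TorVanishes N) : Function.Injective (rTensor T f) :=
  rTensor_injective_of_shortExact hf hfg hg (P.d_hom_comp_d_hom 0) P.exact_d_hom_π_hom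
    P.surjective_π_hom (hN 0)

end CategoryTheory.ProjectiveResolution

namespace IsSyzygyOf

variable {R : Type} [CommRing R]

theorem baseChange {S : Type} [CommRing S] [Algebra R S]
    (P : ProjectiveResolution (ModuleCat.of R S)) {n : ℕ} {K M : ModuleCat.{0} R}
    (h : IsSyzygyOf R n K M) (hM : P.TorVanishes M) :
    P.TorVanishes K ∧
      IsSyzygyOf S n (ModuleCat.of S (S ⊗[R] K)) (ModuleCat.of S (S ⊗[R] M)) := by
  induction h with
  | zero => exact ⟨hM, .zero _⟩
  | succ F _ _ f g hf hg hfg _ ih =>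
    obtain ⟨hN, hNS⟩ := ih hM
    have hexact : Function.Exact f g := LinearMap.exact_iff.mpr hfg.symm
    have hinj : Function.Injective (rTensor (ModuleCat.of R S) f) :=
      ProjectiveResolution.rTensor_injective_of_torVanishes hf hexact hg hN
    have hexactS : Function.Exact (f.baseChange S) (g.baseChange S) := by
      simpa only [LinearMap.baseChange_eq_ltensor] using lTensor_exact S hexact hg
    refine ⟨hN.of_shortExact hf hexact hg, .succ (ModuleCat.of S (S ⊗[R] F)) inferInstance
      inferInstance (f.baseChange S) (g.baseChange S) ?_ ?_ (LinearMap.exact_iff.mp hexactS).symm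
      hNS⟩
    · simpa only [LinearMap.baseChange_eq_ltensor, lTensor_inj_iff_rTensor_inj] using hinj
    · simpa only [LinearMap.baseChange_eq_ltensor] using lTensor_surjective S hg

theorem exists_finite [IsNoetherianRing R] (M : ModuleCat.{0} R) [Module.Finite R M] (n : ℕ) :
    ∃ K : ModuleCat.{0} R, IsSyzygyOf R n K M ∧ Module.Finite R K := by
  induction n with
  | zero => exact ⟨M, .zero M, inferInstance⟩
  | succ n ih =>
    obtain ⟨K, hK, _⟩ := ih
    obtain ⟨d, g, hg⟩ := Module.Finite.exists_fin' R K
    exact ⟨ModuleCat.of R (ker g), .succ (ModuleCat.of R (Fin d → R)) inferInstance inferInstance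
      (ker g).subtype g (ker g).injective_subtype hg (ker g).range_subtype hK, inferInstance⟩

end IsSyzygyOf

section Schanuel

variable {S : Type*} [CommRing S]

theorem Function.Exact.nonempty_linearEquiv_prod {A B C : Type*} [AddCommGroup A]
    [AddCommGroup B] [AddCommGroup C] [Module S A] [Module S B] [Module S C]
    [Module.Projective S C] {f : A →ₗ[S] B} {g : B →ₗ[S] C} (h : Function.Exact f g)
    (hf : Function.Injective f) (hg : Function.Surjective g) : Nonempty (B ≃ₗ[S] A × C) :=
  let ⟨l, hl⟩ := Module.projective_lifting_property g LinearMap.id hg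
  ⟨(h.splitSurjectiveEquiv hf ⟨l, hl⟩).1⟩

theorem Function.Exact.inl_comp_prodMap {K F N A : Type*} [AddCommGroup K] [AddCommGroup F]
    [AddCommGroup N] [AddCommGroup A] [Module S K] [Module S F] [Module S N] [Module S A]
    {f : K →ₗ[S] F} {g : F →ₗ[S] N} (h : Function.Exact f g) :
    Function.Exact (inl S F A ∘ₗ f) (g.prodMap (LinearMap.id : A →ₗ[S] A)) := by
  rintro ⟨u, a⟩
  simp only [prodMap_apply, LinearMap.id_apply, Prod.mk_eq_zero, h u, Set.mem_range, coe_comp,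
    Function.comp_apply, inl_apply, Prod.mk.injEq]
  constructor
  · rintro ⟨⟨k, rfl⟩, rfl⟩
    exact ⟨k, rfl, rfl⟩
  · rintro ⟨k, rfl, rfl⟩
    exact ⟨⟨k, rfl⟩, rfl⟩

variable {K₁ K₂ F₁ F₂ N : Type*} [AddCommGroup K₁] [AddCommGroup K₂] [AddCommGroup F₁]
  [AddCommGroup F₂] [AddCommGroup N] [Module S K₁] [Module S K₂] [Module S F₁] [Module S F₂]
  [Module S N]

/-- `ker (g₁.coprod (-g₂))` is the pullback `F₁ ×_N F₂`. -/
theorem nonempty_ker_coprod_neg_equiv [Module.Projective S F₁] (g₁ : F₁ →ₗ[S] N)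
    {f₂ : K₂ →ₗ[S] F₂} {g₂ : F₂ →ₗ[S] N} (hf₂ : Function.Injective f₂)
    (h₂ : Function.Exact f₂ g₂) (hg₂ : Function.Surjective g₂) :
    Nonempty (ker (g₁.coprod (-g₂)) ≃ₗ[S] K₂ × F₁) := by
  let ι : K₂ →ₗ[S] ker (g₁.coprod (-g₂)) :=
    (inr S F₁ F₂ ∘ₗ f₂).codRestrict _ fun k ↦ by simp [h₂.apply_apply_eq_zero]
  let π : ker (g₁.coprod (-g₂)) →ₗ[S] F₁ := fst S F₁ F₂ ∘ₗ (ker _).subtype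
  refine Function.Exact.nonempty_linearEquiv_prod (f := ι) (g := π) ?_
    (fun a b hab ↦ hf₂ congr(($hab).1.2)) fun u ↦ ?_
  · rintro ⟨⟨u, v⟩, huv⟩
    simp only [π, coe_comp, Function.comp_apply, Submodule.coe_subtype, fst_apply]
    constructor
    · rintro rfl
      obtain ⟨k, rfl⟩ := (h₂ v).mp (by simpa using huv)
      exact ⟨k, rfl⟩
    · rintro ⟨k, hk⟩
      exact congr(($hk.symm).1.1)
  · obtain ⟨v, hv⟩ := hg₂ (g₁ u)
    exact ⟨⟨(u, v), by simp [hv]⟩, rfl⟩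

theorem schanuel [Module.Projective S F₁] [Module.Projective S F₂]
    {f₁ : K₁ →ₗ[S] F₁} {g₁ : F₁ →ₗ[S] N} (hf₁ : Function.Injective f₁)
    (h₁ : Function.Exact f₁ g₁) (hg₁ : Function.Surjective g₁)
    {f₂ : K₂ →ₗ[S] F₂} {g₂ : F₂ →ₗ[S] N} (hf₂ : Function.Injective f₂)
    (h₂ : Function.Exact f₂ g₂) (hg₂ : Function.Surjective g₂) :
    Nonempty ((K₁ × F₂) ≃ₗ[S] (K₂ × F₁)) := by
  obtain ⟨e₁⟩ := nonempty_ker_coprod_neg_equiv g₂ hf₁ h₁ hg₁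
  obtain ⟨e₂⟩ := nonempty_ker_coprod_neg_equiv g₁ hf₂ h₂ hg₂
  have hswap : (ker (g₂.coprod (-g₁))).map (LinearEquiv.prodComm S F₂ F₁).toLinearMap =
      ker (g₁.coprod (-g₂)) := by
    ext ⟨u, v⟩
    simp only [Submodule.mem_map_equiv, mem_ker, coprod_apply, LinearMap.neg_apply]
    rw [add_neg_eq_zero, add_neg_eq_zero, eq_comm]
    rfl
  exact ⟨e₁.symm.trans (((LinearEquiv.prodComm S F₂ F₁).ofSubmodules _ _ hswap).trans e₂)⟩

end Schanuel

section StableIsomorphism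

variable (S : Type) [CommRing S]

def StablyIsomorphic (X Y : Type) [AddCommGroup X] [AddCommGroup Y] [Module S X] [Module S Y] :
    Prop :=
  ∃ A B : ModuleCat.{0} S, Module.Projective S A ∧ Module.Projective S B ∧
    Nonempty ((X × A) ≃ₗ[S] (Y × B))

variable {S}

namespace StablyIsomorphic

variable {X Y : Type} [AddCommGroup X] [AddCommGroup Y] [Module S X] [Module S Y]

theorem refl : StablyIsomorphic S X X :=
  ⟨.of S S, .of S S, inferInstance, inferInstance, ⟨.refl S _⟩⟩

theorem projective [Module.Projective S Y] (h : StablyIsomorphic S X Y) :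
    Module.Projective S X := by
  obtain ⟨A, B, -, _, ⟨e⟩⟩ := h
  exact .of_split (e.toLinearMap ∘ₗ inl S X A) (fst S X A ∘ₗ e.symm.toLinearMap) (by ext; simp)

theorem of_exact {K₁ F₁ N₁ K₂ F₂ N₂ : Type} [AddCommGroup K₁] [AddCommGroup F₁]
    [AddCommGroup N₁] [AddCommGroup K₂] [AddCommGroup F₂] [AddCommGroup N₂]
    [Module S K₁] [Module S F₁] [Module S N₁] [Module S K₂] [Module S F₂] [Module S N₂]
    [Module.Projective S F₁] [Module.Projective S F₂]
    {f₁ : K₁ →ₗ[S] F₁} {g₁ : F₁ →ₗ[S] N₁} (hf₁ : Function.Injective f₁)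
    (h₁ : Function.Exact f₁ g₁) (hg₁ : Function.Surjective g₁)
    {f₂ : K₂ →ₗ[S] F₂} {g₂ : F₂ →ₗ[S] N₂} (hf₂ : Function.Injective f₂)
    (h₂ : Function.Exact f₂ g₂) (hg₂ : Function.Surjective g₂)
    (hN : StablyIsomorphic S N₁ N₂) : StablyIsomorphic S K₁ K₂ := by
  obtain ⟨A, B, _, _, ⟨e⟩⟩ := hN
  let g₁' : F₁ × A →ₗ[S] N₂ × B := e.toLinearMap ∘ₗ g₁.prodMap LinearMap.id
  let g₂' : F₂ × B →ₗ[S] N₂ × B := g₂.prodMap LinearMap.id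
  have hg₁' : Function.Surjective g₁' :=
    e.surjective.comp (Prod.map_surjective.mpr ⟨hg₁, Function.surjective_id⟩)
  have hg₂' : Function.Surjective g₂' := Prod.map_surjective.mpr ⟨hg₂, Function.surjective_id⟩
  obtain ⟨e'⟩ := schanuel (LinearMap.inl_injective.comp hf₁)
    (h₁.inl_comp_prodMap.comp_injective _ e.injective (map_zero e)) hg₁'
    (LinearMap.inl_injective.comp hf₂) h₂.inl_comp_prodMap hg₂'
  exact ⟨.of S (F₂ × B), .of S (F₁ × A), inferInstanceAs (Module.Projective S (F₂ × B)),
    inferInstanceAs (Module.Projective S (F₁ × A)), ⟨e'⟩⟩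

end StablyIsomorphic

theorem IsSyzygyOf.stablyIsomorphic {n : ℕ} {K₁ K₂ X : ModuleCat.{0} S}
    (h₁ : IsSyzygyOf S n K₁ X) (h₂ : IsSyzygyOf S n K₂ X) : StablyIsomorphic S K₁ K₂ := by
  induction h₁ generalizing K₂ with
  | zero => cases h₂; exact .refl
  | succ F₁ _ _ f₁ g₁ hf₁ hg₁ hfg₁ _ ih =>
    cases h₂ with
    | succ F₂ _ _ f₂ g₂ hf₂ hg₂ hfg₂ hN₂ =>
      exact .of_exact hf₁ (LinearMap.exact_iff.mpr hfg₁.symm) hg₁ hf₂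
        (LinearMap.exact_iff.mpr hfg₂.symm) hg₂ (ih hN₂)

end StableIsomorphism

section LocalRing

open IsLocalRing

variable {R : Type*} [CommRing R] [IsLocalRing R]

theorem IsLocalRing.exists_surjective_ker_le_maximalIdeal_smul (K : Type*) [AddCommGroup K]
    [Module R K] [Module.Finite R K] :
    ∃ (d : ℕ) (g : (Fin d → R) →ₗ[R] K),
      Function.Surjective g ∧ ker g ≤ maximalIdeal R • (⊤ : Submodule R (Fin d → R)) := by
  let b := Module.finBasis (ResidueField R) (ResidueField R ⊗[R] K)
  choose v hv using fun i ↦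
    TensorProduct.mk_surjective R K (ResidueField R) Ideal.Quotient.mk_surjective (b i)
  refine ⟨_, Fintype.linearCombination R v, ?_, fun c hc ↦ ?_⟩
  · rw [← range_eq_top, Fintype.range_linearCombination]
    exact span_eq_top_of_tmul_eq_basis v b hv
  -- a relation among the `v i` reduces to a relation among the basis vectors `b i`
  have hres : ∀ i, residue R (c i) = 0 := by
    have hsum : ∑ i, residue R (c i) • b i = 0 := by
      have := congr(TensorProduct.mk R (ResidueField R) K 1 $hc)
      simp only [← hv, ← ResidueField.algebraMap_eq, algebraMap_smul]
      simpa [Fintype.linearCombination_apply, tmul_sum] using this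
    exact Fintype.linearIndependent_iff.mp b.linearIndependent _ hsum
  rw [pi_eq_sum_univ c]
  exact Submodule.sum_mem _ fun i _ ↦ Submodule.smul_mem_smul
    ((residue_eq_zero_iff _).mp (hres i)) Submodule.mem_top

theorem IsLocalRing.exists_surjective_residueField (K : Type*) [AddCommGroup K] [Module R K]
    [Module.Finite R K] [Nontrivial K] :
    ∃ φ : K →ₗ[R] ResidueField R, Function.Surjective φ := by
  have : Nontrivial (ResidueField R ⊗[R] K) := by
    rw [← not_subsingleton_iff_nontrivial, subsingleton_tensorProduct]
    exact not_subsingleton K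
  let b := Module.Free.chooseBasis (ResidueField R) (ResidueField R ⊗[R] K)
  obtain ⟨i⟩ := b.index_nonempty
  have hcoord : Function.Surjective ((b.coord i).restrictScalars R) := fun c ↦ ⟨c • b i, by simp⟩
  refine ⟨(b.coord i).restrictScalars R ∘ₗ TensorProduct.mk R (ResidueField R) K 1, ?_⟩
  rw [coe_comp]
  exact hcoord.comp (TensorProduct.mk_surjective R K (ResidueField R) Ideal.Quotient.mk_surjective)

theorem IsLocalRing.ker_eq_bot_of_le_maximalIdeal_smul {B C : Type*} [AddCommGroup B]
    [AddCommGroup C] [Module R B] [Module R C] [Module.Finite R B] [Module.Projective R C]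
    {g : B →ₗ[R] C} (hg : Function.Surjective g) (hker : ker g ≤ maximalIdeal R • ⊤) :
    ker g = ⊥ := by
  obtain ⟨σ, hσ⟩ := Module.projective_lifting_property g LinearMap.id hg
  have hgσ (c : C) : g (σ c) = c := LinearMap.congr_fun hσ c
  -- `B = ker g ⊕ range σ` with `ker g ≤ 𝔪B`, so Nakayama forces `range σ = B`
  have hσtop : range σ = ⊤ := by
    refine top_le_iff.mp (Submodule.le_of_le_smul_of_le_jacobson_bot Module.Finite.fg_top
      (jacobson_eq_maximalIdeal ⊥ bot_ne_top).ge fun x _ ↦ ?_)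
    refine Submodule.mem_sup.mpr ⟨σ (g x), mem_range_self σ _, x - σ (g x), hker ?_, by abel⟩
    simp [hgσ]
  refine eq_bot_iff.mpr fun x hx ↦ ?_
  obtain ⟨c, rfl⟩ : x ∈ range σ := hσtop ▸ Submodule.mem_top
  rw [mem_ker, hgσ] at hx
  simp [hx]

end LocalRing

section LocalHom

open IsLocalRing

variable {R S : Type*} [CommRing R] [CommRing S] [Algebra R S]

theorem Submodule.baseChange_le_map_smul_top {M : Type*} [AddCommGroup M] [Module R M]
    {I : Ideal R} {p : Submodule R M} (hp : p ≤ I • ⊤) :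
    p.baseChange S ≤ I.map (algebraMap R S) • (⊤ : Submodule S (S ⊗[R] M)) := by
  rw [baseChange_eq_span, span_le]
  rintro _ ⟨x, hx, rfl⟩
  rw [SetLike.mem_coe]
  refine Submodule.smul_induction_on (hp hx) (fun r hr m _ ↦ ?_) fun x y hx hy ↦ ?_
  · rw [mk_apply, tmul_smul, ← algebraMap_smul S r]
    exact smul_mem_smul (Ideal.mem_map_of_mem _ hr) mem_top
  · simpa only [map_add] using add_mem hx hy

variable [IsLocalRing R] [IsLocalRing S] [IsLocalHom (algebraMap R S)]

theorem nontrivial_tensorProduct_of_isLocalHom (K : Type*) [AddCommGroup K] [Module R K]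
    [Module.Finite R K] [Nontrivial K] : Nontrivial (S ⊗[R] K) := by
  obtain ⟨φ, hφ⟩ := exists_surjective_residueField (R := R) K
  -- `S ⊗[R] K` surjects onto `S ⊗[R] (R ⧸ 𝔪) ≃ S ⧸ 𝔪S`, which is nonzero since `𝔪S ≤ 𝔫`
  have : Nontrivial (S ⧸ maximalIdeal R • (⊤ : Submodule R S)) := by
    refine Submodule.Quotient.nontrivial_iff.mpr ?_
    rw [Ideal.smul_top_eq_map, Ne, Submodule.restrictScalars_eq_top_iff]
    exact (map_maximalIdeal_lt_top (algebraMap R S)).ne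
  have := ((TensorProduct.comm R S (ResidueField R)).trans
    (TensorProduct.quotTensorEquivQuotSMul S (maximalIdeal R))).toEquiv.nontrivial
  exact (lTensor_surjective S hφ).nontrivial

end LocalHom

theorem Module.free_of_projective_baseChange {R S : Type} [CommRing R] [CommRing S]
    [IsNoetherianRing R] [IsLocalRing R] [IsLocalRing S] [Algebra R S]
    [IsLocalHom (algebraMap R S)] (P : ProjectiveResolution (ModuleCat.of R S)) (K : Type)
    [AddCommGroup K] [Module R K] [Module.Finite R K] (hK : P.TorVanishes K)
    [Module.Projective S (S ⊗[R] K)] : Module.Free R K := by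
  obtain ⟨d, g, hg, hker⟩ := IsLocalRing.exists_surjective_ker_le_maximalIdeal_smul (R := R) K
  have hexact : Function.Exact (ker g).subtype g := g.exact_subtype_ker_map
  have hinj : Function.Injective (rTensor (ModuleCat.of R S) (ker g).subtype) :=
    ProjectiveResolution.rTensor_injective_of_torVanishes (ker g).injective_subtype hexact hg hK
  have hexactS : Function.Exact ((ker g).subtype.baseChange S) (g.baseChange S) := by
    simpa only [LinearMap.baseChange_eq_ltensor] using lTensor_exact S hexact hg
  have hkerS : ker (g.baseChange S) = ⊥ := by
    refine IsLocalRing.ker_eq_bot_of_le_maximalIdeal_smul (by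
      simpa only [LinearMap.baseChange_eq_ltensor] using lTensor_surjective S hg) ?_
    rw [hexactS.linearMap_ker_eq]
    exact (Submodule.baseChange_le_map_smul_top hker).trans
      (Submodule.smul_mono_left (IsLocalRing.map_maximalIdeal_le _))
  have hinjS : Function.Injective ((ker g).subtype.baseChange S) := by
    simpa only [LinearMap.baseChange_eq_ltensor, lTensor_inj_iff_rTensor_inj] using hinj
  have hzero (a : S ⊗[R] ker g) : (ker g).subtype.baseChange S a = 0 := by
    rw [← Submodule.mem_bot S, ← hkerS, hexactS.linearMap_ker_eq]
    exact mem_range_self _ a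
  have : Subsingleton (S ⊗[R] ker g) := ⟨fun a b ↦ hinjS (by rw [hzero, hzero])⟩
  have hker0 : ker g = ⊥ := by
    by_contra hne
    have := Submodule.nontrivial_iff_ne_bot.mpr hne
    exact not_nontrivial _ (nontrivial_tensorProduct_of_isLocalHom (R := R) (S := S) (ker g))
  exact .of_equiv (LinearEquiv.ofBijective g ⟨ker_eq_bot.mp hker0, hg⟩)

theorem stmt_12_general (R S : Type) [CommRing R] [CommRing S]
    [IsNoetherianRing R] [IsLocalRing R] [IsLocalRing S]
    [Algebra R S] (hloc : IsLocalHom (algebraMap R S))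
    (M : Type) [AddCommGroup M] [Module R M] [Module.Finite R M]
    (hTor : ∀ i : ℕ, 0 < i →
      Subsingleton (TorGroup R (ModuleCat.of R M) (ModuleCat.of R S) i)) :
    (∃ n : ℕ, ProjDimLE R n (ModuleCat.of R M)) ↔
      (∃ n : ℕ, ProjDimLE S n (ModuleCat.of S (TensorProduct R S M))) := by
  obtain ⟨P⟩ := HasProjectiveResolution.out (Z := ModuleCat.of R S)
  have hM : P.TorVanishes M := P.torVanishes_of_subsingleton_torGroup M hTor
  constructor
  · rintro ⟨n, K, hK, _⟩
    exact ⟨n, _, (hK.baseChange P hM).2, inferInstance⟩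
  · rintro ⟨n, K', hK', _⟩
    obtain ⟨K, hK, _⟩ := IsSyzygyOf.exists_finite (ModuleCat.of R M) n
    obtain ⟨hKtor, hKS⟩ := hK.baseChange P hM
    have : Module.Projective S (S ⊗[R] K) := (hKS.stablyIsomorphic hK').projective
    exact ⟨n, K, hK, Module.free_of_projective_baseChange P K hKtor⟩

/-- Along a local homomorphism `R → S` of Noetherian local rings, if `M` is a finitely
generated `R`-module with `Tor_i^R(M,S) = 0` for `i > 0`, then `pd_R M < ∞` iff
`pd_S (M ⊗_R S) < ∞`. -/
theorem stmt_12 (R S : Type) [CommRing R] [CommRing S]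
    [IsNoetherianRing R] [IsNoetherianRing S] [IsLocalRing R] [IsLocalRing S]
    [Algebra R S] (hloc : IsLocalHom (algebraMap R S))
    (M : Type) [AddCommGroup M] [Module R M] [Module.Finite R M]
    (hTor : ∀ i : ℕ, 0 < i →
      Subsingleton (TorGroup R (ModuleCat.of R M) (ModuleCat.of R S) i)) :
    (∃ n : ℕ, ProjDimLE R n (ModuleCat.of R M)) ↔
      (∃ n : ℕ, ProjDimLE S n (ModuleCat.of S (TensorProduct R S M))) :=
  stmt_12_general R S hloc M hTor
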